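/- arXiv:2512.22794 — 8 statements merged into one kernel-verified Lean document; each statement's English description precedes it below -/
import Mathlib

section
/- Consider functions f : Fin m → Fin p, g : Fin m' → Fin p', a : Fin p → Fin q, b : Fin p' → Fin q', and horizontal maps σ : Fin m → Fin m', ω : Fin p → Fin p', τ : Fin q → Fin q' with g ∘ σ = ω ∘ f and b ∘ ω = τ ∘ a. If σ is order-preserving on the fibres of τ ∘ a ∘ f (mapping into fibres of b ∘ g), and ω is order-preserving on the fibres of τ ∘ a (mapping into fibres of b), then σ is order-preserving on the fibres of ω ∘ f (mapping into fibres of g): that is, for all i j : Fin m with ω (f i) = ω (f j) and i ≤ j, one has σ i ≤ σ j. -/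
/-!
Since `b ∘ ω = τ ∘ a`, equal values of `ω` have equal values of `τ ∘ a`, so each fibre of
`ω ∘ f` lies inside a fibre of `τ ∘ a ∘ f`; monotonicity of `σ` on the coarser fibres then
restricts to the finer ones.
-/

def FibrewiseMonotone {α β γ : Type*} [Preorder α] [Preorder β] (σ : α → β) (k : α → γ) :
    Prop :=
  ∀ i j, i ≤ j → k i = k j → σ i ≤ σ j

theorem FibrewiseMonotone.of_fibres_le {α β γ δ : Type*} [Preorder α] [Preorder β]
    {σ : α → β} {k : α → γ} {k' : α → δ} (hk : ∀ i j, k' i = k' j → k i = k j)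
    (hσ : FibrewiseMonotone σ k) : FibrewiseMonotone σ k' :=
  fun i j hij hk' => hσ i j hij (hk i j hk')

theorem apply_eq_of_comp_eq_comp {α β γ δ : Type*} {ω : α → β} {b : β → δ} {a : α → γ}
    {τ : γ → δ} (h : b ∘ ω = τ ∘ a) {x y : α} (hxy : ω x = ω y) : τ (a x) = τ (a y) :=
  calc τ (a x) = b (ω x) := (congrFun h x).symm
    _ = b (ω y) := by rw [hxy]
    _ = τ (a y) := congrFun h y

theorem verticalfop_Fin_general {m m' p p' q q' : ℕ}
    (f : Fin m → Fin p)
    (a : Fin p → Fin q) (b : Fin p' → Fin q')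
    (σ : Fin m → Fin m') (ω : Fin p → Fin p') (τ : Fin q → Fin q')
    (hsq₂ : b ∘ ω = τ ∘ a)
    (hσ : ∀ i j : Fin m, i ≤ j → τ (a (f i)) = τ (a (f j)) → σ i ≤ σ j) :
    ∀ i j : Fin m, i ≤ j → ω (f i) = ω (f j) → σ i ≤ σ j :=
  FibrewiseMonotone.of_fibres_le (k := fun i => τ (a (f i)))
    (fun _ _ hω => apply_eq_of_comp_eq_comp hsq₂ hω) hσ

/-- Proposition 4.3 (verticalfop) in the skeletal category of finite sets:
if `σ` is order-preserving on the fibres of `τ ∘ a ∘ f` and `ω` is order-preserving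
on the fibres of `τ ∘ a`, then `σ` is order-preserving on the fibres of `ω ∘ f`. -/
theorem verticalfop_Fin {m m' p p' q q' : ℕ}
    (f : Fin m → Fin p) (g : Fin m' → Fin p')
    (a : Fin p → Fin q) (b : Fin p' → Fin q')
    (σ : Fin m → Fin m') (ω : Fin p → Fin p') (τ : Fin q → Fin q')
    (hsq₁ : g ∘ σ = ω ∘ f) (hsq₂ : b ∘ ω = τ ∘ a)
    (hσ : ∀ i j : Fin m, i ≤ j → τ (a (f i)) = τ (a (f j)) → σ i ≤ σ j)
    (hω : ∀ x y : Fin p, x ≤ y → τ (a x) = τ (a y) → ω x ≤ ω y) :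
    ∀ i j : Fin m, i ≤ j → ω (f i) = ω (f j) → σ i ≤ σ j :=
  verticalfop_Fin_general f a b σ ω τ hsq₂ hσ
end

section
/- For f : Fin m → Fin p and g : Fin p → Fin q, let (π f, η f) denote the unique pita factorisation of f (π f a bijection on Fin m order-preserving on the fibres of f, η f monotone, f = η f ∘ π f), and similarly for g ∘ f and g. Then there exists a unique function e : Fin m → Fin p with e ∘ π (g ∘ f) = π g ∘ f and η g ∘ e = η (g ∘ f). -/
/-!
Since `π(g ∘ f)` is bijective, the first condition determines `e = π(g) ∘ f ∘ π(g ∘ f)⁻¹`.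
The second condition may be checked after precomposing with the surjection `π(g ∘ f)`, where it
becomes `η(g) ∘ π(g) ∘ f = η(g ∘ f) ∘ π(g ∘ f)`: both sides are `g ∘ f`.
-/

def IsPita {m n : ℕ} (f : Fin m → Fin n) (p : Fin m → Fin m) (e : Fin m → Fin n) : Prop :=
  Monotone e ∧ Function.Bijective p ∧
    (∀ i j : Fin m, f i = f j → i ≤ j → p i ≤ p j) ∧ e ∘ p = f

open Function

theorem Function.Bijective.existsUnique_comp_eq {α β γ : Type*} {p : α → β} (hp : Bijective p)
    (h : α → γ) : ∃! e : β → γ, e ∘ p = h := by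
  refine ⟨h ∘ surjInv hp.surjective, ?_, fun e he => ?_⟩
  · show (h ∘ _) ∘ p = h
    rw [comp_assoc, (leftInverse_surjInv hp).comp_eq_id, comp_id]
  · rw [← he, comp_assoc, (rightInverse_surjInv hp.surjective).comp_eq_id, comp_id]

/-- Fin is strictly factorisable: there is a unique comparison map `e = η(f/g)`
with `e ∘ π(g∘f) = π(g) ∘ f` and `η(g) ∘ e = η(g∘f)`. -/
theorem eta_comparison_existsUnique {m p q : ℕ}
    (f : Fin m → Fin p) (g : Fin p → Fin q)
    (pgf : Fin m → Fin m) (egf : Fin m → Fin q)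
    (pg : Fin p → Fin p) (eg : Fin p → Fin q)
    (hgf : IsPita (g ∘ f) pgf egf) (hg : IsPita g pg eg) :
    ∃! e : Fin m → Fin p, e ∘ pgf = pg ∘ f ∧ eg ∘ e = egf := by
  obtain ⟨-, hbij, -, hfac_gf⟩ := hgf
  obtain ⟨-, -, -, hfac_g⟩ := hg
  obtain ⟨e, he, he_unique⟩ := hbij.existsUnique_comp_eq (pg ∘ f)
  refine ⟨e, ⟨he, hbij.surjective.injective_comp_right ?_⟩, fun e' he' => he_unique e' he'.1⟩
  calc (eg ∘ e) ∘ pgf = (eg ∘ pg) ∘ f := by rw [comp_assoc, he, comp_assoc]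
    _ = egf ∘ pgf := by rw [hfac_g, hfac_gf]
end

section
/- For composable functions f : Fin m → Fin p, g : Fin p → Fin q, h : Fin q → Fin r, the comparison maps of the pita factorisation satisfy η(g/h) ∘ η(f/(h∘g)) = η((g∘f)/h), where for u : Fin a → Fin b and v : Fin b → Fin c, η(u/v) denotes the unique map e : Fin a → Fin b with e ∘ π(v∘u) = π(v) ∘ u and η(v) ∘ e = η(v∘u). -/
theorem IsPita.cancel_right {α : Type*} {m n : ℕ} {f : Fin m → Fin n} {p : Fin m → Fin m}
    {e : Fin m → Fin n} (hf : IsPita f p e) {u v : Fin m → α} (huv : u ∘ p = v ∘ p) : u = v :=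
  hf.2.1.2.injective_comp_right huv

theorem eta_comparison_assoc_general {m p q r : ℕ}
    (f : Fin m → Fin p) (g : Fin p → Fin q) (h : Fin q → Fin r)
    (ph : Fin q → Fin q) (eh : Fin q → Fin r)
    (phg : Fin p → Fin p) (ehg : Fin p → Fin r)
    (phgf : Fin m → Fin m) (ehgf : Fin m → Fin r) (hhgf : IsPita (h ∘ g ∘ f) phgf ehgf)
    (e₁ : Fin p → Fin q) (he₁ : e₁ ∘ phg = ph ∘ g ∧ eh ∘ e₁ = ehg)
    (e₂ : Fin m → Fin p) (he₂ : e₂ ∘ phgf = phg ∘ f ∧ ehg ∘ e₂ = ehgf)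
    (e₃ : Fin m → Fin q) (he₃ : e₃ ∘ phgf = ph ∘ (g ∘ f) ∧ eh ∘ e₃ = ehgf) :
    e₁ ∘ e₂ = e₃ :=
  hhgf.cancel_right <| calc
    e₁ ∘ e₂ ∘ phgf = e₁ ∘ phg ∘ f := by rw [he₂.1]
    _ = ph ∘ g ∘ f := by rw [← Function.comp_assoc, he₁.1, Function.comp_assoc]
    _ = e₃ ∘ phgf := he₃.1.symm

/-- Associativity of the comparison maps: `η(g/h) ∘ η(f/(h∘g)) = η((g∘f)/h)`. -/
theorem eta_comparison_assoc {m p q r : ℕ}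
    (f : Fin m → Fin p) (g : Fin p → Fin q) (h : Fin q → Fin r)
    (ph : Fin q → Fin q) (eh : Fin q → Fin r) (hh : IsPita h ph eh)
    (phg : Fin p → Fin p) (ehg : Fin p → Fin r) (hhg : IsPita (h ∘ g) phg ehg)
    (phgf : Fin m → Fin m) (ehgf : Fin m → Fin r) (hhgf : IsPita (h ∘ g ∘ f) phgf ehgf)
    (e₁ : Fin p → Fin q) (he₁ : e₁ ∘ phg = ph ∘ g ∧ eh ∘ e₁ = ehg)
    (e₂ : Fin m → Fin p) (he₂ : e₂ ∘ phgf = phg ∘ f ∧ ehg ∘ e₂ = ehgf)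
    (e₃ : Fin m → Fin q) (he₃ : e₃ ∘ phgf = ph ∘ (g ∘ f) ∧ eh ∘ e₃ = ehgf) :
    e₁ ∘ e₂ = e₃ :=
  eta_comparison_assoc_general f g h ph eh phg ehg phgf ehgf hhgf e₁ he₁ e₂ he₂ e₃ he₃
end

section
/- For f : Fin m → Fin p and g : Fin p → Fin q, if g and g ∘ f are both monotone, then η(f/g) = f; in particular in that case π(g∘f) = π(g) = id and η(g) ∘ f = η(g∘f). -/
/-- Across fibres of `f` the order of `p` is forced by the monotonicity of `e`; within a fibre
it is the fibre condition together with injectivity. -/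
theorem IsPita.strictMono_of_monotone {m n : ℕ} {f : Fin m → Fin n} {p : Fin m → Fin m}
    {e : Fin m → Fin n} (h : IsPita f p e) (hf : Monotone f) : StrictMono p := by
  obtain ⟨he, hp, hfib, rfl⟩ := h
  intro i j hij
  rcases (hf hij.le).lt_or_eq with hlt | heq
  · exact he.reflect_lt hlt
  · exact (hfib i j heq hij.le).lt_of_ne (hp.injective.ne hij.ne)

theorem IsPita.eq_id_of_monotone {m n : ℕ} {f : Fin m → Fin n} {p : Fin m → Fin m}
    {e : Fin m → Fin n} (h : IsPita f p e) (hf : Monotone f) : p = id :=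
  (h.strictMono_of_monotone hf).eq_id

/-- Lemma 5.7 (6): if `g` and `g ∘ f` are monotone then `η(f/g) = f`; in particular
`π(g∘f) = π(g) = id` and `η(g) ∘ f = η(g∘f)`. -/
theorem eta_comparison_of_monotone {m p q : ℕ}
    (f : Fin m → Fin p) (g : Fin p → Fin q)
    (hg : Monotone g) (hgf : Monotone (g ∘ f))
    (pgf : Fin m → Fin m) (egf : Fin m → Fin q) (hPgf : IsPita (g ∘ f) pgf egf)
    (pg : Fin p → Fin p) (eg : Fin p → Fin q) (hPg : IsPita g pg eg)
    (e : Fin m → Fin p) (he : e ∘ pgf = pg ∘ f ∧ eg ∘ e = egf) :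
    e = f ∧ pgf = id ∧ pg = id ∧ eg ∘ f = egf := by
  obtain ⟨hcomm, hfactor⟩ := he
  have hpgf : pgf = id := hPgf.eq_id_of_monotone hgf
  have hpg : pg = id := hPg.eq_id_of_monotone hg
  have he : e = f := by simpa [hpgf, hpg] using hcomm
  exact ⟨he, hpgf, hpg, he ▸ hfactor⟩
end

section
/- For f : Fin m → Fin p and g : Fin p → Fin q, the map π(g∘f) : Fin m → Fin m is fibrewise order-preserving with respect to η(f/g): for all i ≤ j in Fin m with η(f/g)(π(g∘f) i) = η(f/g)(π(g∘f) j), one has π(g∘f) i ≤ π(g∘f) j; equivalently, π(g∘f) carries each fibre of η(f/g)∘π(g∘f) order-preservingly onto the corresponding fibre of η(f/g). -/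
/-- Lemma 5.8 in Fin: the naturality square of the pita unit is fibrewise
order-preserving: `π(g∘f)` carries each fibre of `η(f/g) ∘ π(g∘f)` order-preservingly
onto the corresponding fibre of `η(f/g)`. -/
theorem pita_unit_naturality_fop {m p q : ℕ}
    (f : Fin m → Fin p) (g : Fin p → Fin q)
    (pgf : Fin m → Fin m) (egf : Fin m → Fin q) (hPgf : IsPita (g ∘ f) pgf egf)
    (pg : Fin p → Fin p) (eg : Fin p → Fin q) (hPg : IsPita g pg eg)
    (e : Fin m → Fin p) (he : e ∘ pgf = pg ∘ f ∧ eg ∘ e = egf) :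
    ∀ i j : Fin m, i ≤ j → e (pgf i) = e (pgf j) → pgf i ≤ pgf j := by
  intro i j hij hee
  obtain ⟨-, -, hfop, hcomp⟩ := hPgf
  apply hfop i j ?_ hij
  have h1 : eg (e (pgf i)) = eg (e (pgf j)) := by rw [hee]
  have h2 : ∀ k, eg (e k) = egf k := fun k => congrFun he.2 k
  have h3 : ∀ k, egf (pgf k) = (g ∘ f) k := fun k => congrFun hcomp k
  simpa [h2, h3] using h1
end

section
/- Let f : Fin m → Fin p, g : Fin m' → Fin p' with σ : Fin m → Fin m' a bijection and τ : Fin p → Fin p' a bijection such that g ∘ σ = τ ∘ f. Then there exists a unique ω : Fin m → Fin m' such that ω ∘ π(f) = π(g) ∘ σ and η(g) ∘ ω = τ ∘ η(f). Moreover, if σ is order-preserving on the fibres of τ ∘ f (i.e. for i ≤ j with τ(f i) = τ(f j), σ i ≤ σ j), then ω = π(τ ∘ η(f)) and η(g) = η(τ ∘ η(f)). -/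
namespace IsPita

open Function

variable {m n : ℕ} {f : Fin m → Fin n} {p : Fin m → Fin m} {e : Fin m → Fin n}

theorem bijective (h : IsPita f p e) : Bijective p := h.2.1

theorem comp_eq (h : IsPita f p e) : e ∘ p = f := h.2.2.2

theorem apply_eq (h : IsPita f p e) (i : Fin m) : e (p i) = f i :=
  congrFun h.comp_eq i

theorem lt_iff (h : IsPita f p e) {i j : Fin m} :
    p i < p j ↔ f i < f j ∨ f i = f j ∧ i < j := by
  have hfe : ∀ k, e (p k) = f k := h.apply_eq
  obtain ⟨he, hp, hfib, -⟩ := h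
  have hlt_of_lt : ∀ {k l}, f k < f l → p k < p l := fun hkl => he.reflect_lt (by rwa [hfe, hfe])
  constructor
  · intro hlt
    rcases lt_trichotomy (f i) (f j) with hij | hij | hij
    · exact Or.inl hij
    · exact Or.inr ⟨hij, lt_of_not_ge fun hji => (hfib j i hij.symm hji).not_gt hlt⟩
    · exact absurd (hlt_of_lt hij) hlt.not_gt
  · rintro (hij | ⟨hij, hlt⟩)
    · exact hlt_of_lt hij
    · exact (hfib i j hij hlt.le).lt_of_ne (hp.1.ne hlt.ne)

theorem le_iff_of_apply_eq (h : IsPita f p e) {i j : Fin m} (hij : f i = f j) :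
    p i ≤ p j ↔ i ≤ j := by
  rw [← not_lt, ← not_lt, h.lt_iff, hij]
  simp

theorem unique {p' : Fin m → Fin m} {e' : Fin m → Fin n} (h : IsPita f p e)
    (h' : IsPita f p' e') : p = p' ∧ e = e' := by
  let E := Equiv.ofBijective p h.bijective
  have hmono : StrictMono (p' ∘ E.symm) := fun a b hab => by
    rw [← E.apply_symm_apply a, ← E.apply_symm_apply b] at hab
    exact h'.lt_iff.2 (h.lt_iff.1 hab)
  have hp : p' = p := funext fun i => by simpa [E] using congrFun hmono.eq_id (p i)
  subst hp
  exact ⟨rfl, h.bijective.2.injective_comp_right (h.comp_eq.trans h'.comp_eq.symm)⟩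

variable {g : Fin m → Fin n} {pg : Fin m → Fin m} {eg : Fin m → Fin n}
  {σ : Fin m → Fin m} {τ : Fin n → Fin n} {ω : Fin m → Fin m}

theorem comp_comparison_eq (h : IsPita f p e) (hg : IsPita g pg eg) (hsq : g ∘ σ = τ ∘ f)
    (hω : ω ∘ p = pg ∘ σ) : eg ∘ ω = τ ∘ e :=
  h.bijective.2.injective_comp_right <| show (eg ∘ ω) ∘ p = (τ ∘ e) ∘ p by
    rw [comp_assoc, hω, ← comp_assoc, hg.comp_eq, hsq, comp_assoc, h.comp_eq]

theorem comparison_isPita (h : IsPita f p e) (hg : IsPita g pg eg) (hσ : Bijective σ)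
    (hτ : Injective τ) (hsq : g ∘ σ = τ ∘ f)
    (hord : ∀ i j : Fin m, i ≤ j → τ (f i) = τ (f j) → σ i ≤ σ j)
    (hω : ω ∘ p = pg ∘ σ) : IsPita (τ ∘ e) ω eg := by
  refine ⟨hg.1, ?_, ?_, h.comp_comparison_eq hg hsq hω⟩
  · exact (Bijective.of_comp_iff ω h.bijective).1 (hω ▸ hg.bijective.comp hσ)
  · intro i j hτe hij
    obtain ⟨a, rfl⟩ := h.bijective.2 i
    obtain ⟨b, rfl⟩ := h.bijective.2 j
    have hτf : τ (f a) = τ (f b) := by simpa only [comp_apply, h.apply_eq] using hτe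
    have hab : a ≤ b := (h.le_iff_of_apply_eq (hτ hτf)).1 hij
    have hgσ : g (σ a) = g (σ b) := by
      simpa only [comp_apply] using (congrFun hsq a).trans (hτf.trans (congrFun hsq b).symm)
    have hωp : ∀ k, ω (p k) = pg (σ k) := congrFun hω
    rw [hωp, hωp]
    exact (hg.le_iff_of_apply_eq hgσ).2 (hord a b hab hτf)

end IsPita

/-- Proposition 6.7 in Fin: for a square `g ∘ σ = τ ∘ f` with `σ`, `τ` bijections,
there is a unique `ω` with `ω ∘ π(f) = π(g) ∘ σ` and `η(g) ∘ ω = τ ∘ η(f)`;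
moreover if `σ` is order-preserving on the fibres of `τ ∘ f`, then
`ω = π(τ ∘ η(f))` and `η(g) = η(τ ∘ η(f))`. -/
theorem pita_square_comparison {m p : ℕ}
    (f g : Fin m → Fin p) (σ : Fin m → Fin m) (τ : Fin p → Fin p)
    (hσ : Function.Bijective σ) (hτ : Function.Bijective τ)
    (hsq : g ∘ σ = τ ∘ f)
    (pf : Fin m → Fin m) (ef : Fin m → Fin p) (hPf : IsPita f pf ef)
    (pg : Fin m → Fin m) (eg : Fin m → Fin p) (hPg : IsPita g pg eg) :
    (∃! ω : Fin m → Fin m, ω ∘ pf = pg ∘ σ ∧ eg ∘ ω = τ ∘ ef) ∧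
      ((∀ i j : Fin m, i ≤ j → τ (f i) = τ (f j) → σ i ≤ σ j) →
        ∀ ω : Fin m → Fin m, (ω ∘ pf = pg ∘ σ ∧ eg ∘ ω = τ ∘ ef) →
          ∀ pt : Fin m → Fin m, ∀ et : Fin m → Fin p,
            IsPita (τ ∘ ef) pt et → ω = pt ∧ eg = et) := by
  have hpf := hPf.bijective
  obtain ⟨ω₀, hω₀⟩ : ∃ ω₀ : Fin m → Fin m, ω₀ ∘ pf = pg ∘ σ :=
    ⟨pg ∘ σ ∘ (Equiv.ofBijective pf hpf).symm, by ext; simp⟩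
  refine ⟨⟨ω₀, ⟨hω₀, hPf.comp_comparison_eq hPg hsq hω₀⟩,
    fun ω hω => hpf.2.injective_comp_right (hω.1.trans hω₀.symm)⟩, ?_⟩
  rintro hord ω ⟨hω, -⟩ pt et hPt
  exact (hPf.comparison_isPita hPg hσ hτ.1 hsq hord hω).unique hPt
end

section
/- For f₃ : Fin m → Fin p and f₂ : Fin p → Fin q, the following coherence identity between pita units holds: π(η(f₃/f₂)) ∘ π(f₂ ∘ f₃) = π(π(f₂) ∘ η(f₃)) ∘ π(f₃) as maps Fin m → Fin m. -/
def MonotoneOnFibres {α β γ : Type*} [LE α] [LE γ] (f : α → β) (p : α → γ) : Prop :=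
  ∀ i j, f i = f j → i ≤ j → p i ≤ p j

theorem MonotoneOnFibres.of_fibres_subset {α β β' γ : Type*} [LE α] [LE γ]
    {f : α → β} {f' : α → β'} {p : α → γ} (h : MonotoneOnFibres f' p)
    (hff' : ∀ i j, f i = f j → f' i = f' j) : MonotoneOnFibres f p :=
  fun i j hij hle => h i j (hff' i j hij) hle

namespace IsPita

variable {m n : ℕ} {f : Fin m → Fin n} {p : Fin m → Fin m} {e : Fin m → Fin n}

theorem le_of_lex_le (h : IsPita f p e) {i j : Fin m}
    (hij : toLex (f i, i) ≤ toLex (f j, j)) : p i ≤ p j := by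
  obtain ⟨he, -, hfib, hep⟩ := h
  rcases Prod.Lex.toLex_le_toLex.1 hij with hlt | ⟨heq, hle⟩
  · by_contra! hji
    have := he hji.le
    simp only [← hep, Function.comp_apply] at hlt
    exact absurd hlt (not_lt.2 this)
  · exact hfib i j heq hle

theorem lt_iff_lex_lt (h : IsPita f p e) (i j : Fin m) :
    p i < p j ↔ toLex (f i, i) < toLex (f j, j) := by
  refine ⟨fun hp => ?_, fun hij => ?_⟩
  · by_contra! hji
    exact absurd (h.le_of_lex_le hji) (not_le.2 hp)
  · have hne : i ≠ j := by rintro rfl; exact lt_irrefl _ hij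
    exact (h.le_of_lex_le hij.le).lt_of_ne (h.2.1.1.ne hne)

theorem perm_eq {p' : Fin m → Fin m} {e' : Fin m → Fin n}
    (h : IsPita f p e) (h' : IsPita f p' e') : p = p' := by
  let σ := Equiv.ofBijective p h.2.1
  have hmono : StrictMono (p' ∘ σ.symm) := fun a b hab => by
    rw [← σ.apply_symm_apply a, ← σ.apply_symm_apply b] at hab
    exact (h'.lt_iff_lex_lt _ _).2 ((h.lt_iff_lex_lt _ _).1 hab)
  have hsurj : Function.Surjective (p' ∘ σ.symm) := h'.2.1.2.comp σ.symm.surjective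
  have hid : p' ∘ σ.symm = id :=
    congrArg DFunLike.coe (Subsingleton.elim (hmono.orderIsoOfSurjective _ hsurj) (OrderIso.refl _))
  funext i
  simpa [σ] using (congrFun hid (σ i)).symm

theorem comp {p' : Fin m → Fin m} {e' : Fin m → Fin n} (h : IsPita e p' e')
    (hp : Function.Bijective p) (hfib : MonotoneOnFibres f p) (hep : e ∘ p = f) :
    IsPita f (p' ∘ p) e' := by
  obtain ⟨he', hp', hfib', hep'⟩ := h
  refine ⟨he', hp'.comp hp, fun i j hij hle => hfib' _ _ ?_ (hfib i j hij hle), ?_⟩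
  · simp only [← hep, Function.comp_apply] at hij
    exact hij
  · rw [← Function.comp_assoc, hep', hep]

end IsPita

/-- The key coherence equation for the β-cells of the pita nerve in Fin:
`π(η(f₃/f₂)) ∘ π(f₂ ∘ f₃) = π(π(f₂) ∘ η(f₃)) ∘ π(f₃)`. -/
theorem pita_beta_coherence {m p q : ℕ}
    (f₃ : Fin m → Fin p) (f₂ : Fin p → Fin q)
    (p₃ : Fin m → Fin m) (e₃ : Fin m → Fin p) (hP₃ : IsPita f₃ p₃ e₃)
    (p₂ : Fin p → Fin p) (e₂ : Fin p → Fin q) (hP₂ : IsPita f₂ p₂ e₂)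
    (p₂₃ : Fin m → Fin m) (e₂₃ : Fin m → Fin q) (hP₂₃ : IsPita (f₂ ∘ f₃) p₂₃ e₂₃)
    (e : Fin m → Fin p) (he : e ∘ p₂₃ = p₂ ∘ f₃ ∧ e₂ ∘ e = e₂₃)
    (pe : Fin m → Fin m) (ee : Fin m → Fin p) (hPe : IsPita e pe ee)
    (pc : Fin m → Fin m) (ec : Fin m → Fin p) (hPc : IsPita (p₂ ∘ e₃) pc ec) :
    pe ∘ p₂₃ = pc ∘ p₃ := by
  obtain ⟨-, hp₂, -, hf₂⟩ := hP₂
  obtain ⟨-, hp₃, hfib₃, hf₃⟩ := hP₃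
  obtain ⟨-, hp₂₃, hfib₂₃, -⟩ := hP₂₃
  have hL : IsPita (p₂ ∘ f₃) (pe ∘ p₂₃) ee :=
    hPe.comp hp₂₃ (MonotoneOnFibres.of_fibres_subset hfib₂₃ fun i j hij => by
      rw [← hf₂]; exact congrArg e₂ hij) he.1
  have hR : IsPita (p₂ ∘ f₃) (pc ∘ p₃) ec :=
    hPc.comp hp₃ (MonotoneOnFibres.of_fibres_subset hfib₃ fun i j hij => hp₂.1 hij)
      (by rw [Function.comp_assoc, hf₃])
  exact hL.perm_eq hR
end

section
/- Weak blow-up in Fin: let h : Fin m → Fin n be monotone with fibre cardinalities c i = |h⁻¹(i)|, and for each i : Fin n let f_i : Fin (c i) → Fin (d i) be any function. Then there exists a unique pair (f, g) with g : Fin (Σ d i) → Fin n monotone with fibre cardinalities d i, and f : Fin m → Fin (Σ d i) over Fin n (g ∘ f = h), such that for each i the map induced by f from the fibre h⁻¹(i) to the fibre g⁻¹(i) equals f_i under the canonical monotone identifications of the fibres with Fin (c i) and Fin (d i). -/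
/-! A monotone map `u : Fin N → β` is determined by its fibre cardinalities, because
`u j < b ↔ j < #{k | u k < b}`; this forces `g` to send the `i`-th block (of length `d i`) of
`Fin (∑ i, d i)` to `i`. In the coordinates `Σ i, Fin (c i)` of the domain (each fibre of `h`
enumerated increasingly) and `Σ i, Fin (d i)` of the codomain (via `finSigmaFinEquiv`), a
strictly monotone enumeration of a finite set being unique, the fibre condition says exactly
that `f'` is `Sigma.map id f`. -/

open Finset

section MonotoneFiber

variable {N : ℕ} {β : Type*} [LinearOrder β]

theorem Monotone.lt_iff_val_lt_card {u : Fin N → β} (hu : Monotone u) (j : Fin N) (b : β) :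
    u j < b ↔ (j : ℕ) < #{k | u k < b} := by
  constructor
  · intro hj
    have hsub : Iic j ⊆ ({k | u k < b} : Finset (Fin N)) := fun k hk =>
      mem_filter.2 ⟨mem_univ _, (hu (mem_Iic.1 hk)).trans_lt hj⟩
    simpa using card_le_card hsub
  · intro hj
    by_contra! hbj
    have hsub : ({k | u k < b} : Finset (Fin N)) ⊆ Iio j := fun k hk =>
      mem_Iio.2 (lt_of_not_ge fun hjk => ((mem_filter.1 hk).2.trans_le hbj).not_ge (hu hjk))
    simpa using (card_le_card hsub).trans_lt' hj

variable [LocallyFiniteOrderBot β] [DecidableEq β]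

theorem card_filter_lt_eq_sum_card_fiber (u : Fin N → β) (b : β) :
    #{k | u k < b} = ∑ a ∈ Iio b, #{k | u k = a} := by
  rw [card_eq_sum_card_fiberwise (f := u) (t := Iio b) fun k hk => by simpa using hk]
  refine sum_congr rfl fun a ha => ?_
  rw [filter_filter]
  refine congrArg card (filter_congr fun k _ => ⟨And.right, ?_⟩)
  rintro rfl; exact ⟨mem_Iio.1 ha, rfl⟩

theorem Monotone.eq_of_card_fiber_eq {u v : Fin N → β} (hu : Monotone u) (hv : Monotone v)
    (huv : ∀ b, #{k | u k = b} = #{k | v k = b}) : u = v := by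
  have hlt : ∀ b, #{k | u k < b} = #{k | v k < b} := fun b => by
    simp only [card_filter_lt_eq_sum_card_fiber, huv]
  funext j
  exact eq_of_forall_gt_iff fun b => by
    rw [hu.lt_iff_val_lt_card, hv.lt_iff_val_lt_card, hlt]

end MonotoneFiber

section Blocks

variable {m : ℕ} (n : Fin m → ℕ)

theorem finSigmaFinEquiv_mk_val (i : Fin m) (x : Fin (n i)) :
    (finSigmaFinEquiv ⟨i, x⟩ : ℕ) = ∑ k ∈ Iio i, n k + x := by
  rw [finSigmaFinEquiv_apply]
  congr 1
  refine sum_bij (fun k _ => Fin.castLE i.2.le k) (fun k _ => by simp [Fin.lt_def])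
    (fun _ _ _ _ h => Fin.castLE_injective _ h)
    (fun k hk => ⟨⟨k, Fin.lt_def.1 (mem_Iio.1 hk)⟩, mem_univ _, rfl⟩) (fun _ _ => rfl)

theorem strictMono_finSigmaFinEquiv_mk (i : Fin m) :
    StrictMono fun x : Fin (n i) => finSigmaFinEquiv (⟨i, x⟩ : Σ i, Fin (n i)) := by
  intro x y hxy
  simp only [Fin.lt_def, finSigmaFinEquiv_mk_val] at hxy ⊢
  omega

theorem finSigmaFinEquiv_mk_lt_mk {i i' : Fin m} (hi : i < i') (x : Fin (n i)) (x' : Fin (n i')) :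
    finSigmaFinEquiv (⟨i, x⟩ : Σ i, Fin (n i)) < finSigmaFinEquiv ⟨i', x'⟩ := by
  have hblock : ∑ k ∈ Iio i, n k + n i ≤ ∑ k ∈ Iio i', n k := by
    rw [add_comm, ← sum_insert notMem_Iio_self, Iio_insert]
    exact sum_le_sum_of_subset fun k hk => mem_Iio.2 ((mem_Iic.1 hk).trans_lt hi)
  simp only [Fin.lt_def, finSigmaFinEquiv_mk_val]
  omega

/-- The block of `Fin (∑ i, n i)`, cut into consecutive blocks of lengths `n i`, containing `j`. -/
def blockIndex (j : Fin (∑ i, n i)) : Fin m := (finSigmaFinEquiv.symm j).1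

@[simp]
theorem blockIndex_finSigmaFinEquiv (p : Σ i, Fin (n i)) :
    blockIndex n (finSigmaFinEquiv p) = p.1 := by
  simp [blockIndex]

theorem monotone_blockIndex : Monotone (blockIndex n) := by
  intro j j' hjj'
  by_contra! hlt
  obtain ⟨⟨i, x⟩, rfl⟩ := finSigmaFinEquiv.surjective j
  obtain ⟨⟨i', x'⟩, rfl⟩ := finSigmaFinEquiv.surjective j'
  simp only [blockIndex_finSigmaFinEquiv] at hlt
  exact (finSigmaFinEquiv_mk_lt_mk n hlt x' x).not_ge hjj'

theorem range_finSigmaFinEquiv_mk (i : Fin m) :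
    Set.range (fun x : Fin (n i) => finSigmaFinEquiv (⟨i, x⟩ : Σ i, Fin (n i))) =
      {j | blockIndex n j = i} := by
  ext j
  obtain ⟨⟨i', x'⟩, rfl⟩ := finSigmaFinEquiv.surjective j
  simp only [Set.mem_range, Set.mem_ofPred_eq, blockIndex_finSigmaFinEquiv,
    finSigmaFinEquiv.injective.eq_iff, Sigma.mk.injEq]
  constructor
  · rintro ⟨x, rfl, -⟩; rfl
  · rintro rfl; exact ⟨x', rfl, HEq.rfl⟩

theorem card_blockIndex_fiber (i : Fin m) : #{j | blockIndex n j = i} = n i := by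
  have hfiber : ({j | blockIndex n j = i} : Finset _) =
      univ.image fun x : Fin (n i) => finSigmaFinEquiv (⟨i, x⟩ : Σ i, Fin (n i)) := by
    apply coe_injective
    simp only [coe_filter, mem_univ, true_and, coe_image, coe_univ, Set.image_univ,
      range_finSigmaFinEquiv_mk]
  rw [hfiber, card_image_of_injective _ (strictMono_finSigmaFinEquiv_mk n i).injective, card_fin]

end Blocks

section FiberEnumeration

variable {α β : Type*} [Fintype α] [LinearOrder α] [DecidableEq β] (h : α → β) {c : β → ℕ}
  (hc : ∀ i, c i = #{j | h j = i})

/-- `α` as the disjoint union of the fibres of `h`, each enumerated in increasing order. -/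
def fiberSigmaEquiv : (Σ i, Fin (c i)) ≃ α :=
  (Equiv.sigmaCongrRight fun i => ((orderIsoOfFin _ (hc i).symm).toEquiv.trans
    (Equiv.subtypeEquivRight fun j => by simp))).trans (Equiv.sigmaFiberEquiv h)

theorem fiberSigmaEquiv_mk (i : β) (x : Fin (c i)) :
    fiberSigmaEquiv h hc ⟨i, x⟩ = orderEmbOfFin {j | h j = i} (hc i).symm x := by
  simp [fiberSigmaEquiv]

theorem strictMono_fiberSigmaEquiv_mk (i : β) :
    StrictMono fun x : Fin (c i) => fiberSigmaEquiv h hc ⟨i, x⟩ := by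
  simpa only [fiberSigmaEquiv_mk] using (orderEmbOfFin _ (hc i).symm).strictMono

theorem range_fiberSigmaEquiv_mk (i : β) :
    Set.range (fun x : Fin (c i) => fiberSigmaEquiv h hc ⟨i, x⟩) = {j | h j = i} := by
  simp only [fiberSigmaEquiv_mk, range_orderEmbOfFin, coe_filter, mem_univ, true_and]

theorem apply_fiberSigmaEquiv (p : Σ i, Fin (c i)) : h (fiberSigmaEquiv h hc p) = p.1 :=
  (range_fiberSigmaEquiv_mk h hc p.1).subset ⟨p.2, rfl⟩

end FiberEnumeration

section BlowUp

variable {α : Type*} [Fintype α] [LinearOrder α] {n : ℕ} {h : α → Fin n} {c d : Fin n → ℕ}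
  (hc : ∀ i, c i = #{j | h j = i}) (f : ∀ i, Fin (c i) → Fin (d i))

def blowUp : α → Fin (∑ i, d i) :=
  finSigmaFinEquiv ∘ Sigma.map id f ∘ (fiberSigmaEquiv h hc).symm

theorem blowUp_fiberSigmaEquiv (p : Σ i, Fin (c i)) :
    blowUp hc f (fiberSigmaEquiv h hc p) = finSigmaFinEquiv ⟨p.1, f p.1 p.2⟩ := by
  simp only [blowUp, Function.comp_apply, Equiv.symm_apply_apply]
  rfl

theorem blockIndex_comp_blowUp : blockIndex d ∘ blowUp hc f = h := by
  refine (fiberSigmaEquiv h hc).surjective.injective_comp_right (funext fun p => ?_)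
  simp [blowUp_fiberSigmaEquiv, apply_fiberSigmaEquiv]

theorem forall_fiber_comp_iff_eq_blowUp (F : α → Fin (∑ i, d i)) :
    (∀ (i : Fin n) (εh : Fin (c i) → α) (εg : Fin (d i) → Fin (∑ i, d i)),
        StrictMono εh → Set.range εh = {j | h j = i} →
        StrictMono εg → Set.range εg = {j | blockIndex d j = i} →
        ∀ x, F (εh x) = εg (f i x)) ↔ F = blowUp hc f := by
  constructor
  · intro hF
    refine (fiberSigmaEquiv h hc).surjective.injective_comp_right (funext fun ⟨i, x⟩ => ?_)
    simpa [blowUp_fiberSigmaEquiv] using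
      hF i _ _ (strictMono_fiberSigmaEquiv_mk h hc i) (range_fiberSigmaEquiv_mk h hc i)
        (strictMono_finSigmaFinEquiv_mk d i) (range_finSigmaFinEquiv_mk d i) x
  · rintro rfl i εh εg hεh hεh_range hεg hεg_range x
    obtain rfl := (hεh.range_inj (strictMono_fiberSigmaEquiv_mk h hc i)).1
      (hεh_range.trans (range_fiberSigmaEquiv_mk h hc i).symm)
    obtain rfl := (hεg.range_inj (strictMono_finSigmaFinEquiv_mk d i)).1
      (hεg_range.trans (range_finSigmaFinEquiv_mk d i).symm)
    exact blowUp_fiberSigmaEquiv hc f ⟨i, x⟩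

end BlowUp

theorem weak_blowup_Fin_general {m n : ℕ} (h : Fin m → Fin n)
    (c d : Fin n → ℕ)
    (hc : ∀ i, c i = (Finset.univ.filter (fun j => h j = i)).card)
    (f : ∀ i : Fin n, Fin (c i) → Fin (d i)) :
    ∃! fg : (Fin m → Fin (∑ i, d i)) × (Fin (∑ i, d i) → Fin n),
      Monotone fg.2 ∧
      (∀ i, (Finset.univ.filter (fun j => fg.2 j = i)).card = d i) ∧
      fg.2 ∘ fg.1 = h ∧
      ∀ (i : Fin n) (εh : Fin (c i) → Fin m) (εg : Fin (d i) → Fin (∑ i, d i)),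
        StrictMono εh → Set.range εh = {j | h j = i} →
        StrictMono εg → Set.range εg = {j | fg.2 j = i} →
        ∀ x, fg.1 (εh x) = εg (f i x) := by
  refine ⟨(blowUp hc f, blockIndex d), ⟨monotone_blockIndex d, card_blockIndex_fiber d,
    blockIndex_comp_blowUp hc f, (forall_fiber_comp_iff_eq_blowUp hc f _).2 rfl⟩, ?_⟩
  rintro ⟨F, G⟩ ⟨hG, hG_card, -, hF⟩
  obtain rfl : G = blockIndex d := hG.eq_of_card_fiber_eq (monotone_blockIndex d) fun i => by
    rw [hG_card, card_blockIndex_fiber]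
  rw [(forall_fiber_comp_iff_eq_blowUp hc f F).1 hF]

/-- The weak blow-up axiom holds in Fin: given a monotone `h : Fin m → Fin n`
with fibre cardinalities `c i`, and maps `f i : Fin (c i) → Fin (d i)`, there is a
unique pair `(f', g)` with `g` monotone with fibre cardinalities `d i`,
`g ∘ f' = h`, and the induced maps on fibres equal to the `f i` under the canonical
monotone identifications of the fibres. -/
theorem weak_blowup_Fin {m n : ℕ} (h : Fin m → Fin n) (hmono : Monotone h)
    (c d : Fin n → ℕ)
    (hc : ∀ i, c i = (Finset.univ.filter (fun j => h j = i)).card)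
    (f : ∀ i : Fin n, Fin (c i) → Fin (d i)) :
    ∃! fg : (Fin m → Fin (∑ i, d i)) × (Fin (∑ i, d i) → Fin n),
      Monotone fg.2 ∧
      (∀ i, (Finset.univ.filter (fun j => fg.2 j = i)).card = d i) ∧
      fg.2 ∘ fg.1 = h ∧
      ∀ (i : Fin n) (εh : Fin (c i) → Fin m) (εg : Fin (d i) → Fin (∑ i, d i)),
        StrictMono εh → Set.range εh = {j | h j = i} →
        StrictMono εg → Set.range εg = {j | fg.2 j = i} →
        ∀ x, fg.1 (εh x) = εg (f i x) :=
  weak_blowup_Fin_general h c d hc f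
end
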